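/- Let γ be a 2n×2n real symmetric positive definite matrix with γ ≥ iσ_{2n}. Then the number of symplectic eigenvalues of γ equal to 1 (counted with multiplicity) is n - rank(γ - σ_{2n} γ^{-1} σ_{2n}^T)/2. -/

import Mathlib

/-!
Write `γ = Bᴴ B` with `B` invertible. Then `-σγσγ = (σγσᵀ) Bᴴ B` has the characteristic
polynomial of the symmetric matrix `B σγσᵀ Bᴴ` and is similar to it, so it is diagonalizable:
the multiplicity of its eigenvalue `1` is `2n - rank(-σγσγ - 1)`. Finally
`-σγσγ - 1 = σ (γ - σγ⁻¹σᵀ) (σᵀγ)` with invertible outer factors.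
-/

open Matrix Complex ComplexOrder Polynomial

/-- The standard symplectic form `[[0, I_n], [-I_n, 0]]` on `n` modes. -/
def sympForm (n : ℕ) : Matrix (Fin n ⊕ Fin n) (Fin n ⊕ Fin n) ℝ :=
  Matrix.fromBlocks 0 1 (-1) 0

namespace Matrix.IsHermitian

variable {𝕜 n : Type*} [RCLike 𝕜] [Fintype n] [DecidableEq n] {A : Matrix n n 𝕜}

lemma rootMultiplicity_charpoly (hA : A.IsHermitian) (a : 𝕜) :
    A.charpoly.rootMultiplicity a = Fintype.card {i // (hA.eigenvalues i : 𝕜) = a} := by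
  rw [← count_roots, hA.roots_charpoly_eq_eigenvalues, Multiset.count_map, Fintype.card_subtype]
  simp_rw [eq_comm (a := a)]
  rfl

lemma rank_sub_scalar (hA : A.IsHermitian) (a : 𝕜) :
    (A - scalar n a).rank = Fintype.card {i // (hA.eigenvalues i : 𝕜) ≠ a} := by
  set U := Unitary.conjStarAlgAut 𝕜 _ hA.eigenvectorUnitary
  have hdiag : A - scalar n a = U (diagonal fun i => (hA.eigenvalues i : 𝕜) - a) := by
    conv_lhs => rw [hA.spectral_theorem]
    change _ - algebraMap 𝕜 (Matrix n n 𝕜) a = _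
    rw [← AlgHomClass.commutes U, ← map_sub, algebraMap_eq_diagonal, ← diagonal_sub]
    rfl
  rw [hdiag, Unitary.conjStarAlgAut_apply, ← Unitary.coe_star]
  simp [-isUnit_iff_ne_zero, -Unitary.coe_star, rank_diagonal, sub_eq_zero]

lemma rootMultiplicity_charpoly_add_rank_sub_scalar (hA : A.IsHermitian) (a : 𝕜) :
    A.charpoly.rootMultiplicity a + (A - scalar n a).rank = Fintype.card n := by
  rw [hA.rootMultiplicity_charpoly, hA.rank_sub_scalar, Fintype.card_subtype_compl]
  have := Fintype.card_subtype_le fun i => (hA.eigenvalues i : 𝕜) = a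
  omega

lemma rootMultiplicity_charpoly_mul_add_rank_mul_sub_scalar (hA : A.IsHermitian)
    {P : Matrix n n 𝕜} (hP : P.PosDef) (a : 𝕜) :
    (A * P).charpoly.rootMultiplicity a + (A * P - scalar n a).rank = Fintype.card n := by
  open scoped MatrixOrder in
  obtain ⟨B, rfl⟩ := CStarAlgebra.nonneg_iff_eq_star_mul_self.mp hP.posSemidef.nonneg
  rw [star_eq_conjTranspose] at hP ⊢
  have hB : IsUnit B.det := by
    have := (isUnit_iff_isUnit_det _).mp hP.isUnit
    rw [det_mul] at this
    exact isUnit_of_mul_isUnit_right this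
  have hcharpoly : (A * (Bᴴ * B)).charpoly = (B * A * Bᴴ).charpoly := by
    rw [← mul_assoc, charpoly_mul_comm, ← mul_assoc]
  have hconj : A * (Bᴴ * B) - scalar n a = B⁻¹ * (B * A * Bᴴ - scalar n a) * B := by
    rw [mul_sub, sub_mul, mul_assoc _ (scalar n a),
      (scalar_commute a (fun _ => Commute.all _ _) B).eq]
    simp only [← mul_assoc, nonsing_inv_mul _ hB, one_mul]
  rw [hcharpoly, hconj, rank_mul_eq_left_of_isUnit_det _ _ hB,
    rank_mul_eq_right_of_isUnit_det _ _ (isUnit_nonsing_inv_det _ hB),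
    (isHermitian_mul_mul_conjTranspose B hA).rootMultiplicity_charpoly_add_rank_sub_scalar]

end Matrix.IsHermitian

lemma sympForm_transpose (n : ℕ) : (sympForm n)ᵀ = -sympForm n := by
  simp [sympForm, fromBlocks_transpose, fromBlocks_neg]

lemma sympForm_mul_self (n : ℕ) : sympForm n * sympForm n = -1 := by
  simp [sympForm, fromBlocks_multiply, ← fromBlocks_one, fromBlocks_neg]

lemma isUnit_det_sympForm (n : ℕ) : IsUnit (sympForm n).det :=
  isUnit_det_of_left_inverse (B := -sympForm n) (by rw [neg_mul, sympForm_mul_self, neg_neg])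

lemma sympForm_mul_sub_mul_inv_mul_transpose_mul {n : ℕ}
    {γ : Matrix (Fin n ⊕ Fin n) (Fin n ⊕ Fin n) ℝ} (hγ : IsUnit γ.det) :
    sympForm n * (γ - sympForm n * γ⁻¹ * (sympForm n)ᵀ) * ((sympForm n)ᵀ * γ) =
      sympForm n * γ * (sympForm n)ᵀ * γ - 1 := by
  set σ := sympForm n
  rw [sympForm_transpose]
  calc σ * (γ - σ * γ⁻¹ * -σ) * (-σ * γ)
        = σ * γ * -σ * γ - (σ * σ) * γ⁻¹ * (σ * σ) * γ := by noncomm_ring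
    _ = σ * γ * -σ * γ - 1 := by simp [σ, sympForm_mul_self, nonsing_inv_mul _ hγ]

theorem card_unit_symplectic_eigenvalues_general (n : ℕ)
    (γ : Matrix (Fin n ⊕ Fin n) (Fin n ⊕ Fin n) ℝ)
    (hγ : γ.PosDef) :
    (Matrix.charpoly (-(sympForm n * γ * sympForm n * γ))).rootMultiplicity 1 =
      2 * n - (γ - sympForm n * γ⁻¹ * (sympForm n)ᵀ).rank := by
  set σ := sympForm n
  have hσ : σᴴ = σᵀ := conjTranspose_eq_transpose_of_trivial σ
  have hM : -(σ * γ * σ * γ) = σ * γ * σᴴ * γ := by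
    simp [σ, sympForm_transpose]
  have hγdet : IsUnit γ.det := (isUnit_iff_isUnit_det γ).mp hγ.isUnit
  have hσγdet : IsUnit (σᵀ * γ).det := by
    simpa [det_mul] using (isUnit_det_sympForm n).mul hγdet
  have hrank : (σ * γ * σᴴ * γ - scalar _ 1).rank = (γ - σ * γ⁻¹ * σᵀ).rank := by
    rw [map_one, hσ, ← sympForm_mul_sub_mul_inv_mul_transpose_mul hγdet,
      rank_mul_eq_left_of_isUnit_det _ _ hσγdet,
      rank_mul_eq_right_of_isUnit_det _ _ (isUnit_det_sympForm n)]
  have hcount := (isHermitian_mul_mul_conjTranspose σ hγ.1)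
    |>.rootMultiplicity_charpoly_mul_add_rank_mul_sub_scalar hγ 1
  rw [hrank, Fintype.card_sum, Fintype.card_fin] at hcount
  rw [hM]
  omega

/-- For `γ` real symmetric positive definite with `γ ≥ iσ_{2n}`, the number
of symplectic eigenvalues of `γ` equal to `1`, counted with multiplicity, is
`n - rank(γ - σ γ⁻¹ σᵀ)/2`.  Each symplectic eigenvalue `D_j` of `γ` contributes the
eigenvalue `D_j²` twice to `-σγσγ`, so this is expressed as: the algebraic multiplicity of
the eigenvalue `1` in `-σγσγ` (i.e. twice the number of unit symplectic eigenvalues)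
equals `2n - rank(γ - σ γ⁻¹ σᵀ)`. -/
theorem card_unit_symplectic_eigenvalues (n : ℕ)
    (γ : Matrix (Fin n ⊕ Fin n) (Fin n ⊕ Fin n) ℝ)
    (hγ : γ.PosDef)
    (h : ((γ.map Complex.ofReal) - Complex.I • ((sympForm n).map Complex.ofReal)).PosSemidef) :
    (Matrix.charpoly (-(sympForm n * γ * sympForm n * γ))).rootMultiplicity 1 =
      2 * n - (γ - sympForm n * γ⁻¹ * (sympForm n)ᵀ).rank :=
  card_unit_symplectic_eigenvalues_general n γ hγ
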